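/- Every winning strategy for the game G¹_Φ is also a winning strategy for the game G²_Φ: if ⟨p, H⟩ ∈ W¹_Φ then ⟨{p}, H⟩ ∈ W²_Φ; moreover W² is monotone in its first component: if ⟨P, H⟩ ∈ W²_Φ and P ⊆ P', then ⟨P', H⟩ ∈ W²_Φ. -/

import Mathlib

mutual
  /-- Terms of the λc-calculus (de Bruijn indices for λ-variables):
  variables, abstraction, application, continuation constants `k_π`, and
  instructions `κ ∈ C` (with `instr 0` playing the role of `cc`). -/
  inductive Term : Type
    | var : ℕ → Term
    | lam : Term → Term
    | app : Term → Term → Term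
    | cont : Stack → Term
    | instr : ℕ → Term

  /-- Stacks of the λc-calculus: stack constants `α ∈ B` and push `t·π`. -/
  inductive Stack : Type
    | sconst : ℕ → Stack
    | cons : Term → Stack → Stack
end

/-- The instruction `cc` (call/cc). -/
def cc : Term := .instr 0

/-- Substitution `t{x := u}` of the λ-variable of de Bruijn index `n` by the
(closed) term `u`; it does not propagate through continuation constants. -/
def Term.subst : Term → ℕ → Term → Term
  | .var m, n, u => if m = n then u else if n < m then .var (m - 1) else .var m
  | .lam t, n, u => .lam (t.subst (n + 1) u)
  | .app t₁ t₂, n, u => .app (t₁.subst n u) (t₂.subst n u)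
  | .cont π, _, _ => .cont π
  | .instr k, _, _ => .instr k

/-- One-step evaluation of the Krivine Abstract Machine: the union of the
four rules (Push), (Grab), (Save), (Restore). -/
inductive Step : Term × Stack → Term × Stack → Prop
  | push (t u : Term) (π : Stack) : Step (.app t u, π) (t, .cons u π)
  | grab (t u : Term) (π : Stack) : Step (.lam t, .cons u π) (t.subst 0 u, π)
  | save (t : Term) (π : Stack) : Step (cc, .cons t π) (t, .cons (.cont π) π)
  | restore (t : Term) (π π' : Stack) : Step (.cont π, .cons t π') (t, π)

/-- Church-style encoding of zero: `λx f. x`. -/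
def zeroT : Term := .lam (.lam (.var 1))

/-- Church-style encoding of the successor: `λn x f. f (n x f)`. -/
def succT : Term :=
  .lam (.lam (.lam (.app (.var 0) (.app (.app (.var 2) (.var 1)) (.var 0)))))

/-- The numeral `n̄ ≡ s̄ⁿ 0̄`. -/
def num : ℕ → Term
  | 0 => zeroT
  | n + 1 => .app succT (num n)

/-- Multi-step evaluation `≻`. -/
def StarStep : Term × Stack → Term × Stack → Prop := Relation.ReflTransGen Step

/-- A history entry: an ∃-position `(m⃗_i, n⃗_i, u, π)`. -/
abbrev Hist := List ℕ × List ℕ × Term × Stack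

/-- Winning states of the cumulative game `G²_Φ` for the arithmetical formula
`Φ ≡ ∃x₁∀y₁…∃x_h∀y_h (f(x⃗,y⃗)=0)`.  A state is a pair `⟨P, H⟩` of a set of
processes and a history.  (Win): some `p ∈ P` reaches `u ⋆ π` for a complete
position `(m⃗_h, n⃗_h, u, π) ∈ H` with `f(m⃗_h, n⃗_h) = 0`.  (Play): some
`p ∈ P` reaches `u ⋆ m̄'·ξ·π` for a position `(m⃗_i, n⃗_i, u, π) ∈ H` of size
`i < h`, and for every Abelard answer `(n', u', π')` the extended state is
winning. -/
inductive W2 (h : ℕ) (f : List ℕ → List ℕ → ℕ) :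
    Set (Term × Stack) → Set Hist → Prop
  | win (P : Set (Term × Stack)) (H : Set Hist) (p : Term × Stack)
      (ms ns : List ℕ) (u : Term) (π : Stack) :
      p ∈ P → (ms, ns, u, π) ∈ H → ms.length = h → ns.length = h →
      StarStep p (u, π) → f ms ns = 0 → W2 h f P H
  | play (P : Set (Term × Stack)) (H : Set Hist) (p : Term × Stack)
      (ms ns : List ℕ) (i : ℕ) (u : Term) (π : Stack) (m' : ℕ) (ξ : Term) :
      p ∈ P → (ms, ns, u, π) ∈ H → ms.length = i → ns.length = i → i < h →
      StarStep p (u, .cons (num m') (.cons ξ π)) →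
      (∀ (n' : ℕ) (u' : Term) (π' : Stack),
        W2 h f (P ∪ {(ξ, .cons (num n') (.cons u' π'))})
               (H ∪ {(ms ++ [m'], ns ++ [n'], u', π')})) →
      W2 h f P H

/-- Winning states of the game `G¹_Φ`, whose states carry a single current
process instead of the cumulative set `P`. -/
inductive W1 (h : ℕ) (f : List ℕ → List ℕ → ℕ) :
    (Term × Stack) → Set Hist → Prop
  | win (p : Term × Stack) (H : Set Hist)
      (ms ns : List ℕ) (u : Term) (π : Stack) :
      (ms, ns, u, π) ∈ H → ms.length = h → ns.length = h →
      StarStep p (u, π) → f ms ns = 0 → W1 h f p H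
  | play (p : Term × Stack) (H : Set Hist)
      (ms ns : List ℕ) (i : ℕ) (u : Term) (π : Stack) (m' : ℕ) (ξ : Term) :
      (ms, ns, u, π) ∈ H → ms.length = i → ns.length = i → i < h →
      StarStep p (u, .cons (num m') (.cons ξ π)) →
      (∀ (n' : ℕ) (u' : Term) (π' : Stack),
        W1 h f (ξ, .cons (num n') (.cons u' π'))
               (H ∪ {(ms ++ [m'], ns ++ [n'], u', π')})) →
      W1 h f p H

theorem W2.mono {h : ℕ} {f : List ℕ → List ℕ → ℕ} {P P' : Set (Term × Stack)}
    {H : Set Hist} (hw : W2 h f P H) (hsub : P ⊆ P') : W2 h f P' H := by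
  induction hw generalizing P' with
  | win P H p ms ns u π hp hH hm hn hs hf =>
    exact .win P' H p ms ns u π (hsub hp) hH hm hn hs hf
  | play P H p ms ns i u π m' ξ hp hH hm hn hi hs _ ih =>
    refine .play P' H p ms ns i u π m' ξ (hsub hp) hH hm hn hi hs fun n' u' π' => ?_
    exact ih n' u' π' (Set.union_subset_union_left _ hsub)

theorem W2.of_W1 {h : ℕ} {f : List ℕ → List ℕ → ℕ} {p : Term × Stack} {H : Set Hist}
    (hw : W1 h f p H) : W2 h f {p} H := by
  induction hw with
  | win p H ms ns u π hH hm hn hs hf =>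
    exact .win {p} H p ms ns u π rfl hH hm hn hs hf
  | play p H ms ns i u π m' ξ hH hm hn hi hs _ ih =>
    refine .play {p} H p ms ns i u π m' ξ rfl hH hm hn hi hs fun n' u' π' => ?_
    exact (ih n' u' π').mono Set.subset_union_right

/-- Every winning strategy for `G¹_Φ` is a winning strategy for `G²_Φ`:
`⟨p, H⟩ ∈ W¹` implies `⟨{p}, H⟩ ∈ W²`; moreover `W²` is monotone in its first
component. -/
theorem W1_subset_W2_and_W2_mono (h : ℕ) (f : List ℕ → List ℕ → ℕ) :
    (∀ (p : Term × Stack) (H : Set Hist), W1 h f p H → W2 h f {p} H) ∧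
    (∀ (P P' : Set (Term × Stack)) (H : Set Hist),
      W2 h f P H → P ⊆ P' → W2 h f P' H) :=
  ⟨fun _ _ => W2.of_W1, fun _ _ _ => W2.mono⟩
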